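/- arXiv:1901.02112 — 2 statements merged into one kernel-verified Lean document; each statement's English description precedes it below -/
import Mathlib

section
/- It holds that cl(conv(P^B ∖ C)) = cl(conv(P^B ∖ T^C)) = cl(conv(P^B ∖ R^C)). -/
/-!
The chain `R^C ⊆ T^C ⊆ C` (the segments `{λ r^j : λ⁻_j < λ < λ⁺_j}` lie in `C - x̄` by convexity,
and adding `recc C` stays in `C`) gives the easy inclusions, so it suffices to put every
`x ∈ P^B ∖ R^C` into `D = cl conv(P^B ∖ C)`. Otherwise a functional `f` separates `x` from `D`:
`f < u` on `P^B ∖ C` and `f x > u`. If the halfline `x̄ + λ r^j` leaves `C` for arbitrarily large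
`λ`, then `f(r^j) ≤ 0`; so `f(r^j) > 0` only for `j ∈ N₁`, and there the boundary point
`x̄ + λ⁻_j r^j` gives `λ⁻_j f(r^j) < u - f(x̄)`. Write `x = x̄ + Σ c_j r^j` and let `σ ≤ 1` be such
that the part `y = σ Σ_{f(r^j) > 0} c_j r^j` carries all of `f(x - x̄) > u - f(x̄)`. The bound on
`λ⁻_j f(r^j)` forces `Σ σ c_j / λ⁻_j > 1`, i.e. `y ∈ conv{λ r^j : j ∈ N₁, λ > λ⁻_j}`, while the
rest `d = x - x̄ - y` lies in the cone with `f d = 0`: the ray `x + t d` stays in `P^B` with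
`f > u`, hence in `C`, so `d ∈ recc C` and `x ∈ R^C`.
-/

open Set Pointwise

noncomputable section

variable {n : ℕ} {ι : Type*} [Fintype ι]

/-- Recession cone of a set `A`. -/
def recc (A : Set (Fin n → ℝ)) : Set (Fin n → ℝ) :=
  {d | ∀ a ∈ A, ∀ t : ℝ, 0 ≤ t → a + t • d ∈ A}

/-- The translated simplicial cone `P^B = {x̄ + Σ_j x_j r^j : x_j ≥ 0}`. -/
def PBset (xb : Fin n → ℝ) (r : ι → Fin n → ℝ) : Set (Fin n → ℝ) :=
  {x | ∃ c : ι → ℝ, (∀ j, 0 ≤ c j) ∧ x = xb + ∑ j, c j • r j}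

/-- The recession cone of `P^B`, i.e. `{Σ_j t_j r^j : t_j ≥ 0}`. -/
def reccPBset (r : ι → Fin n → ℝ) : Set (Fin n → ℝ) :=
  {x | ∃ t : ι → ℝ, (∀ j, 0 ≤ t j) ∧ x = ∑ j, t j • r j}

/-- `λ⁻ = inf {λ ≥ 0 : x̄ + λ d ∈ C}` (`+∞` if the halfline misses `C`). -/
noncomputable def lamM (xb d : Fin n → ℝ) (C : Set (Fin n → ℝ)) : EReal :=
  sInf ((fun l : ℝ => (l : EReal)) '' {l : ℝ | 0 ≤ l ∧ xb + l • d ∈ C})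

/-- `λ⁺ = sup {λ ≥ 0 : x̄ + λ d ∈ C}` (`−∞` if the halfline misses `C`). -/
noncomputable def lamP (xb d : Fin n → ℝ) (C : Set (Fin n → ℝ)) : EReal :=
  sSup ((fun l : ℝ => (l : EReal)) '' {l : ℝ | 0 ≤ l ∧ xb + l • d ∈ C})

/-- `N₀`: indices whose halfline misses `C`. -/
def N0set (xb : Fin n → ℝ) (r : ι → Fin n → ℝ) (C : Set (Fin n → ℝ)) : Set ι :=
  {j | ∀ l : ℝ, 0 ≤ l → xb + l • r j ∉ C}

/-- `N₁`: indices with `0 < λ⁻ < +∞` and `λ⁺ = +∞`. -/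
def N1set (xb : Fin n → ℝ) (r : ι → Fin n → ℝ) (C : Set (Fin n → ℝ)) : Set ι :=
  {j | 0 < lamM xb (r j) C ∧ lamM xb (r j) C < ⊤ ∧ lamP xb (r j) C = ⊤}

/-- `N₂`: indices with `0 < λ⁻ < +∞` and `λ⁻ < λ⁺ < +∞`. -/
def N2set (xb : Fin n → ℝ) (r : ι → Fin n → ℝ) (C : Set (Fin n → ℝ)) : Set ι :=
  {j | 0 < lamM xb (r j) C ∧ lamM xb (r j) C < ⊤ ∧
    lamM xb (r j) C < lamP xb (r j) C ∧ lamP xb (r j) C < ⊤}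

/-- `T = {x̄} + conv(⋃_{j∈N₁∪N₂} {λ r^j : λ⁻_j < λ < λ⁺_j})`. -/
def Tset (xb : Fin n → ℝ) (r : ι → Fin n → ℝ) (C : Set (Fin n → ℝ)) : Set (Fin n → ℝ) :=
  {xb} + convexHull ℝ (⋃ j ∈ N1set xb r C ∪ N2set xb r C,
    {y : Fin n → ℝ | ∃ l : ℝ, lamM xb (r j) C < (l : EReal) ∧ (l : EReal) < lamP xb (r j) C ∧
      y = l • r j})

/-- `T^C = T + recc(C)`. -/
def TCset (xb : Fin n → ℝ) (r : ι → Fin n → ℝ) (C : Set (Fin n → ℝ)) : Set (Fin n → ℝ) :=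
  Tset xb r C + recc C

/-- `R = {x̄} + conv(⋃_{j∈N₁} {λ r^j : λ > λ⁻_j})`. -/
def Rset (xb : Fin n → ℝ) (r : ι → Fin n → ℝ) (C : Set (Fin n → ℝ)) : Set (Fin n → ℝ) :=
  {xb} + convexHull ℝ (⋃ j ∈ N1set xb r C,
    {y : Fin n → ℝ | ∃ l : ℝ, lamM xb (r j) C < (l : EReal) ∧ y = l • r j})

/-- `R^C = R + recc(C)`. -/
def RCset (xb : Fin n → ℝ) (r : ι → Fin n → ℝ) (C : Set (Fin n → ℝ)) : Set (Fin n → ℝ) :=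
  Rset xb r C + recc C

lemma mem_recc_of_forall_add_smul_mem {C : Set (Fin n → ℝ)} (hCopen : IsOpen C)
    (hCconv : Convex ℝ C) {x d : Fin n → ℝ}
    (h : ∀ t : ℝ, 0 ≤ t → x + t • d ∈ C) : d ∈ recc C := by
  intro a ha t ht
  have hH : {ε : ℝ | a + ε • (a - x) ∈ C} ∈ nhds 0 :=
    (hCopen.preimage (by fun_prop)).mem_nhds (by simpa using ha)
  obtain ⟨ε, haε, hε : 0 < ε⟩ :=
    ((eventually_nhdsWithin_of_eventually_nhds hH).and (self_mem_nhdsWithin (s := Ioi 0))).exists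
  -- `a + t d` lies on the segment from `a + ε (a - x)` to a far point of the ray from `x`.
  convert hCconv haε (h ((1 + ε) * t / ε) (by positivity)) (a := 1 / (1 + ε)) (b := ε / (1 + ε))
    (by positivity) (by positivity) (by field_simp) using 1
  match_scalars <;> field_simp
  ring

lemma sum_smul_mem_convexHull_of_one_lt {ι E : Type*} [AddCommGroup E] [Module ℝ E]
    {s : Finset ι} {v : ι → E} {lam w : ι → ℝ} (hlam : ∀ j ∈ s, 0 < lam j)
    (hw : ∀ j ∈ s, 0 ≤ w j) (h : 1 < ∑ j ∈ s, w j / lam j) :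
    ∑ j ∈ s, w j • v j ∈ convexHull ℝ (⋃ j ∈ s, {y | ∃ l, lam j < l ∧ y = l • v j}) := by
  set Θ := ∑ j ∈ s, w j / lam j
  have hΘ : 0 < Θ := one_pos.trans h
  have hsum : ∑ j ∈ s, w j • v j = ∑ j ∈ s, (w j / lam j / Θ) • ((Θ * lam j) • v j) :=
    Finset.sum_congr rfl fun j hj ↦ by
      rw [smul_smul]
      field_simp [(hlam j hj).ne']
  rw [hsum]
  refine (convex_convexHull ℝ _).sum_mem (fun j hj ↦ ?_) ?_ fun j hj ↦ ?_
  · exact div_nonneg (div_nonneg (hw j hj) (hlam j hj).le) hΘ.le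
  · rw [← Finset.sum_div, div_self hΘ.ne']
  · refine subset_convexHull ℝ _ (mem_biUnion hj ⟨Θ * lam j, ?_, rfl⟩)
    exact lt_mul_left (hlam j hj) h

section Halfline

variable {xb d : Fin n → ℝ} {C : Set (Fin n → ℝ)} {l : ℝ}

lemma lamM_le_of_mem (hl : 0 ≤ l) (hC : xb + l • d ∈ C) : lamM xb d C ≤ l :=
  sInf_le ⟨l, ⟨hl, hC⟩, rfl⟩

lemma le_lamP_of_mem (hl : 0 ≤ l) (hC : xb + l • d ∈ C) : (l : EReal) ≤ lamP xb d C :=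
  le_sSup ⟨l, ⟨hl, hC⟩, rfl⟩

lemma add_smul_mem_of_lamM_lt_of_lt_lamP (hCconv : Convex ℝ C)
    (hM : lamM xb d C < l) (hP : (l : EReal) < lamP xb d C) : xb + l • d ∈ C := by
  obtain ⟨_, ⟨l₁, ⟨hl₁, hC₁⟩, rfl⟩, h₁⟩ := sInf_lt_iff.mp hM
  obtain ⟨_, ⟨l₂, ⟨-, hC₂⟩, rfl⟩, h₂⟩ := lt_sSup_iff.mp hP
  have hconv : Convex ℝ {t : ℝ | xb + t • d ∈ C} :=
    (hCconv.translate_preimage_right xb).is_linear_preimage (IsLinearMap.isLinearMap_smul' d)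
  exact hconv.ordConnected.out hC₁ hC₂ ⟨(EReal.coe_lt_coe_iff.mp h₁).le,
    (EReal.coe_lt_coe_iff.mp h₂).le⟩

lemma lamM_pos (hxb : xb ∉ closure C) : 0 < lamM xb d C := by
  have hK : {t : ℝ | xb + t • d ∈ closure C}ᶜ ∈ nhds (0 : ℝ) :=
    (isClosed_closure.preimage (by fun_prop)).isOpen_compl.mem_nhds (by simpa using hxb)
  obtain ⟨ε, hε, hεK⟩ := exists_Ico_subset_of_mem_nhds hK ⟨1, one_pos⟩
  refine (EReal.coe_pos.mpr hε).trans_le (le_sInf ?_)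
  rintro _ ⟨t, ⟨ht, htC⟩, rfl⟩
  by_contra! hlt
  exact hεK ⟨ht, EReal.coe_lt_coe_iff.mp hlt⟩ (subset_closure htC)

lemma add_smul_notMem_of_lamM_eq (hCopen : IsOpen C) (hl : 0 < l) (hM : lamM xb d C = l) :
    xb + l • d ∉ C := by
  intro hC
  have hH : {t : ℝ | xb + t • d ∈ C} ∈ nhds l := (hCopen.preimage (by fun_prop)).mem_nhds hC
  obtain ⟨t, htC, ht₀, htl⟩ :=
    ((eventually_nhdsWithin_of_eventually_nhds hH).and (Ioo_mem_nhdsLT hl)).exists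
  have hlt : l ≤ t := EReal.coe_le_coe_iff.mp (hM ▸ lamM_le_of_mem ht₀.le htC)
  linarith

end Halfline

section Cones

variable {ι : Type*} {xb : Fin n → ℝ} {r : ι → Fin n → ℝ} {C : Set (Fin n → ℝ)}

lemma mem_N1set_of_unbounded (hxb : xb ∉ closure C) {j : ι}
    (h : ∀ L : ℝ, ∃ l, L ≤ l ∧ xb + l • r j ∈ C) : j ∈ N1set xb r C := by
  have hray : ∀ L : ℝ, ∃ l : ℝ, 0 ≤ l ∧ L ≤ l ∧ xb + l • r j ∈ C := fun L ↦
    let ⟨l, hl, hC⟩ := h (max 0 L)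
    ⟨l, (le_max_left _ _).trans hl, (le_max_right _ _).trans hl, hC⟩
  obtain ⟨l₀, hl₀, -, hC₀⟩ := hray 0
  refine ⟨lamM_pos hxb, (lamM_le_of_mem hl₀ hC₀).trans_lt (EReal.coe_lt_top l₀), ?_⟩
  refine EReal.eq_top_iff_forall_lt _ |>.mpr fun y ↦ ?_
  obtain ⟨l, hl, hyl, hC⟩ := hray (y + 1)
  exact (EReal.coe_lt_coe_iff.mpr (by linarith)).trans_le (le_lamP_of_mem hl hC)

lemma toReal_lamM_of_mem_N1set {j : ι} (hj : j ∈ N1set xb r C) :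
    0 < (lamM xb (r j) C).toReal ∧ ((lamM xb (r j) C).toReal : EReal) = lamM xb (r j) C := by
  have hcoe := EReal.coe_toReal hj.2.1.ne (ne_bot_of_gt hj.1)
  exact ⟨EReal.coe_pos.mp (hcoe ▸ hj.1), hcoe⟩

lemma TCset_subset (hCconv : Convex ℝ C) : TCset xb r C ⊆ C := by
  rintro _ ⟨_, ⟨x, hx, y, hy, rfl⟩, e, he, rfl⟩
  rw [mem_singleton_iff.mp hx]
  have hconv : Convex ℝ {y | xb + y ∈ C} := hCconv.translate_preimage_right xb
  have hyC : xb + y ∈ C := by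
    refine convexHull_min ?_ hconv hy
    simp only [iUnion_subset_iff]
    rintro j - _ ⟨l, hM, hP, rfl⟩
    exact add_smul_mem_of_lamM_lt_of_lt_lamP hCconv hM hP
  simpa using he _ hyC 1 zero_le_one

lemma RCset_subset_TCset : RCset xb r C ⊆ TCset xb r C := by
  refine add_subset_add_right (add_subset_add_left (convexHull_mono ?_))
  simp only [iUnion_subset_iff]
  rintro j hj _ ⟨l, hl, rfl⟩
  refine mem_biUnion (Or.inl hj) ⟨l, hl, ?_, rfl⟩
  rw [hj.2.2]
  exact EReal.coe_lt_top l

lemma add_sum_smul_add_mem_RCset {P : Finset ι} (hP : ∀ j ∈ P, j ∈ N1set xb r C) {w : ι → ℝ}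
    (hw : ∀ j ∈ P, 0 ≤ w j) (hw₁ : 1 < ∑ j ∈ P, w j / (lamM xb (r j) C).toReal)
    {d : Fin n → ℝ} (hd : d ∈ recc C) : xb + ∑ j ∈ P, w j • r j + d ∈ RCset xb r C := by
  refine add_mem_add (add_mem_add rfl (convexHull_mono ?_ (sum_smul_mem_convexHull_of_one_lt
    (fun j hj ↦ (toReal_lamM_of_mem_N1set (hP j hj)).1) hw hw₁))) hd
  simp only [iUnion_subset_iff]
  rintro j hj _ ⟨l, hl, rfl⟩
  refine mem_biUnion (hP j hj) ⟨l, ?_, rfl⟩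
  rw [← (toReal_lamM_of_mem_N1set (hP j hj)).2]
  exact EReal.coe_lt_coe_iff.mpr hl

end Cones

section SimplicialCone

variable {ι : Type*} [Fintype ι] {xb : Fin n → ℝ} {r : ι → Fin n → ℝ}

lemma mem_PBset_self : xb ∈ PBset xb r := ⟨0, fun _ ↦ le_rfl, by simp⟩

lemma add_smul_mem_PBset {l : ℝ} (hl : 0 ≤ l) (j : ι) : xb + l • r j ∈ PBset xb r := by
  classical
  refine ⟨Pi.single j l, fun k ↦ ?_, by simp [Pi.single_apply, ite_smul]⟩
  by_cases h : k = j <;> simp [h, hl]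

lemma add_mem_PBset {x d : Fin n → ℝ} (hx : x ∈ PBset xb r) (hd : d ∈ reccPBset r) :
    x + d ∈ PBset xb r := by
  obtain ⟨c, hc, rfl⟩ := hx
  obtain ⟨t, ht, rfl⟩ := hd
  refine ⟨c + t, fun j ↦ add_nonneg (hc j) (ht j), ?_⟩
  simp only [Pi.add_apply, add_smul, Finset.sum_add_distrib, add_assoc]

lemma smul_mem_reccPBset {d : Fin n → ℝ} (hd : d ∈ reccPBset r) {t : ℝ} (ht : 0 ≤ t) :
    t • d ∈ reccPBset r := by
  obtain ⟨μ, hμ, rfl⟩ := hd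
  exact ⟨t • μ, fun j ↦ mul_nonneg ht (hμ j), by simp [Finset.smul_sum, smul_smul]⟩

end SimplicialCone

section Separation

variable {ι : Type*} [Fintype ι] {xb : Fin n → ℝ} {r : ι → Fin n → ℝ} {C : Set (Fin n → ℝ)}
  {f : (Fin n → ℝ) →ₗ[ℝ] ℝ} {u : ℝ}

lemma apply_nonpos_of_notMem_N1set (hxb : xb ∉ closure C)
    (hf : ∀ y ∈ PBset xb r \ C, f y < u) {j : ι} (hj : j ∉ N1set xb r C) : f (r j) ≤ 0 := by
  by_contra! hA
  have hγ : 0 ≤ u - f xb :=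
    (sub_pos.mpr (hf xb ⟨mem_PBset_self, fun h ↦ hxb (subset_closure h)⟩)).le
  refine hj (mem_N1set_of_unbounded hxb fun L ↦
    ⟨max L ((u - f xb) / f (r j)), le_max_left _ _, ?_⟩)
  set l := max L ((u - f xb) / f (r j))
  have hl : (u - f xb) / f (r j) ≤ l := le_max_right _ _
  by_contra hC
  have hlt := hf _ ⟨add_smul_mem_PBset ((div_nonneg hγ hA.le).trans hl) j, hC⟩
  simp only [map_add, map_smul, smul_eq_mul] at hlt
  rw [div_le_iff₀ hA] at hl
  linarith

lemma toReal_lamM_mul_apply_lt (hCopen : IsOpen C) (hf : ∀ y ∈ PBset xb r \ C, f y < u)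
    {j : ι} (hj : j ∈ N1set xb r C) : (lamM xb (r j) C).toReal * f (r j) < u - f xb := by
  obtain ⟨hpos, hcoe⟩ := toReal_lamM_of_mem_N1set hj
  have := hf _ ⟨add_smul_mem_PBset hpos.le j, add_smul_notMem_of_lamM_eq hCopen hpos hcoe.symm⟩
  simp only [map_add, map_smul, smul_eq_mul] at this
  linarith

lemma mem_recc_of_apply_nonneg (hCopen : IsOpen C) (hCconv : Convex ℝ C)
    (hf : ∀ y ∈ PBset xb r \ C, f y < u) {x d : Fin n → ℝ} (hx : x ∈ PBset xb r)
    (hux : u < f x) (hd : d ∈ reccPBset r) (hfd : 0 ≤ f d) : d ∈ recc C := by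
  refine mem_recc_of_forall_add_smul_mem hCopen hCconv (x := x) fun t ht ↦ ?_
  by_contra hC
  have := hf _ ⟨add_mem_PBset hx (smul_mem_reccPBset hd ht), hC⟩
  simp only [map_add, map_smul, smul_eq_mul] at this
  nlinarith

lemma one_lt_sum_div_toReal_lamM (hCopen : IsOpen C) (hf : ∀ y ∈ PBset xb r \ C, f y < u)
    (hγ : f xb < u) {P : Finset ι} (hP : ∀ j ∈ P, j ∈ N1set xb r C) {c : ι → ℝ}
    (hc : ∀ j, 0 ≤ c j) {σ : ℝ} (hσ : 0 ≤ σ) (hfx : u - f xb < σ * ∑ j ∈ P, c j * f (r j)) :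
    1 < ∑ j ∈ P, σ * c j / (lamM xb (r j) C).toReal := by
  have hS : ∑ j ∈ P, c j * f (r j) ≤ (u - f xb) * ∑ j ∈ P, c j / (lamM xb (r j) C).toReal := by
    rw [Finset.mul_sum]
    refine Finset.sum_le_sum fun j hj ↦ ?_
    have hlam := (toReal_lamM_of_mem_N1set (hP j hj)).1
    have := toReal_lamM_mul_apply_lt hCopen hf (hP j hj)
    rw [mul_div_assoc', le_div_iff₀ hlam]
    nlinarith [hc j]
  simp only [mul_div_assoc, ← Finset.mul_sum]
  refine lt_of_mul_lt_mul_left ?_ (sub_pos.mpr hγ).le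
  linarith [mul_le_mul_of_nonneg_left hS hσ]

lemma mem_RCset_of_separated (hCopen : IsOpen C) (hCconv : Convex ℝ C) (hxb : xb ∉ closure C)
    (hf : ∀ y ∈ PBset xb r \ C, f y < u) {x : Fin n → ℝ} (hx : x ∈ PBset xb r) (hux : u < f x) :
    x ∈ RCset xb r C := by
  classical
  obtain ⟨c, hc, rfl⟩ := hx
  set P := Finset.univ.filter fun j ↦ 0 < f (r j)
  set S := ∑ j ∈ P, c j * f (r j)
  have hP : ∀ j ∈ P, j ∈ N1set xb r C := fun j hj ↦ by_contra fun hN ↦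
    (Finset.mem_filter.mp hj).2.not_ge (apply_nonpos_of_notMem_N1set hxb hf hN)
  have hγ : f xb < u := hf xb ⟨mem_PBset_self, fun h ↦ hxb (subset_closure h)⟩
  have hfx : u - f xb < ∑ j, c j * f (r j) := by
    simp only [map_add, map_sum, map_smul, smul_eq_mul] at hux
    linarith
  have hS : ∑ j, c j * f (r j) ≤ S := by
    rw [← Finset.sum_filter_add_sum_filter_not Finset.univ fun j ↦ 0 < f (r j)]
    refine add_le_of_nonpos_right (Finset.sum_nonpos fun j hj ↦ ?_)
    exact mul_nonpos_of_nonneg_of_nonpos (hc j) (not_lt.mp (Finset.mem_filter.mp hj).2)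
  have hS₀ : 0 < S := by linarith
  set σ := (∑ j, c j * f (r j)) / S
  have hσ₀ : 0 ≤ σ := div_nonneg (by linarith) hS₀.le
  have hσ₁ : σ ≤ 1 := (div_le_one hS₀).mpr hS
  have hσS : σ * S = ∑ j, c j * f (r j) := div_mul_cancel₀ _ hS₀.ne'
  set μ : ι → ℝ := fun j ↦ c j - if j ∈ P then σ * c j else 0
  have hμ : ∑ j, μ j • r j = ∑ j, c j • r j - ∑ j ∈ P, (σ * c j) • r j := by
    simp only [μ, sub_smul, Finset.sum_sub_distrib, ite_smul, zero_smul, Finset.sum_ite_mem,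
      Finset.univ_inter]
  have hfμ : f (∑ j, μ j • r j) = 0 := by
    simp only [hμ, map_sub, map_sum, map_smul, smul_eq_mul, mul_assoc, ← Finset.mul_sum, hσS,
      sub_self, S]
  have hd : ∑ j, μ j • r j ∈ recc C := by
    refine mem_recc_of_apply_nonneg hCopen hCconv hf ⟨c, hc, rfl⟩ hux ⟨μ, fun j ↦ ?_, rfl⟩ hfμ.ge
    simp only [μ]
    split_ifs
    · nlinarith [hc j]
    · simpa using hc j
  have hweights := one_lt_sum_div_toReal_lamM hCopen hf hγ hP hc hσ₀ (hσS ▸ hfx)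
  convert add_sum_smul_add_mem_RCset hP (fun j _ ↦ mul_nonneg hσ₀ (hc j)) hweights hd using 1
  rw [hμ]
  abel

lemma PBset_diff_RCset_subset_closure_convexHull (hCopen : IsOpen C) (hCconv : Convex ℝ C)
    (hxb : xb ∉ closure C) :
    PBset xb r \ RCset xb r C ⊆ closure (convexHull ℝ (PBset xb r \ C)) := by
  rintro x ⟨hx, hxR⟩
  by_contra hxD
  obtain ⟨f, u, hf, hux⟩ :=
    geometric_hahn_banach_closed_point (convex_convexHull ℝ _).closure isClosed_closure hxD
  exact hxR (mem_RCset_of_separated hCopen hCconv hxb (f := f.toLinearMap)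
    (fun y hy ↦ hf y (subset_closure (subset_convexHull ℝ _ hy))) hx hux)

end Separation

theorem stmt2_general (xb : Fin n → ℝ) (r : ι → Fin n → ℝ)
    (C : Set (Fin n → ℝ)) (hCopen : IsOpen C) (hCconv : Convex ℝ C)
    (hxb : xb ∉ closure C) :
    closure (convexHull ℝ (PBset xb r \ C))
        = closure (convexHull ℝ (PBset xb r \ TCset xb r C)) ∧
      closure (convexHull ℝ (PBset xb r \ C))
        = closure (convexHull ℝ (PBset xb r \ RCset xb r C)) := by
  have h₁ : closure (convexHull ℝ (PBset xb r \ C))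
      ⊆ closure (convexHull ℝ (PBset xb r \ TCset xb r C)) :=
    closure_mono (convexHull_mono (sdiff_subset_sdiff_right (TCset_subset hCconv)))
  have h₂ : closure (convexHull ℝ (PBset xb r \ TCset xb r C))
      ⊆ closure (convexHull ℝ (PBset xb r \ RCset xb r C)) :=
    closure_mono (convexHull_mono (sdiff_subset_sdiff_right RCset_subset_TCset))
  have h₃ : closure (convexHull ℝ (PBset xb r \ RCset xb r C))
      ⊆ closure (convexHull ℝ (PBset xb r \ C)) :=
    closure_minimal (convexHull_min (PBset_diff_RCset_subset_closure_convexHull hCopen hCconv hxb)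
      (convex_convexHull ℝ _).closure) isClosed_closure
  exact ⟨h₁.antisymm (h₂.trans h₃), (h₁.trans h₂).antisymm h₃⟩

/-- Theorem 2. `cl conv(P^B ∖ C) = cl conv(P^B ∖ T^C) = cl conv(P^B ∖ R^C)`. -/
theorem stmt2 (xb : Fin n → ℝ) (r : ι → Fin n → ℝ) (hr : LinearIndependent ℝ r)
    (C : Set (Fin n → ℝ)) (hCopen : IsOpen C) (hCconv : Convex ℝ C)
    (hxb : xb ∉ closure C) :
    closure (convexHull ℝ (PBset xb r \ C))
        = closure (convexHull ℝ (PBset xb r \ TCset xb r C)) ∧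
      closure (convexHull ℝ (PBset xb r \ C))
        = closure (convexHull ℝ (PBset xb r \ RCset xb r C)) :=
  stmt2_general xb r C hCopen hCconv hxb
end
end

section
/- It holds that T^C = S₀^C ∩ (⋂_{k∈N₂} S_k^C), and consequently P^B ∖ T^C = (P^B ∖ S₀^C) ∪ (⋃_{k∈N₂} (P^B ∖ S_k^C)). -/
open Set Pointwise

noncomputable section

variable {n : ℕ} {ι : Type*} [Fintype ι]

/-- `S_k^C = {x̄} + conv(⋃_{j∈N₂} {λ r^j : 0 ≤ λ < λ⁺_j}) + {λ r^k : λ ≤ 0} + recc(C)`. -/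
def SkCset (xb : Fin n → ℝ) (r : ι → Fin n → ℝ) (C : Set (Fin n → ℝ)) (k : ι) :
    Set (Fin n → ℝ) :=
  {xb} + convexHull ℝ (⋃ j ∈ N2set xb r C,
      {y : Fin n → ℝ | ∃ l : ℝ, 0 ≤ l ∧ (l : EReal) < lamP xb (r j) C ∧ y = l • r j})
    + {y : Fin n → ℝ | ∃ l : ℝ, l ≤ 0 ∧ y = l • r k}
    + recc C

/-- `S₀^C = {x̄} + conv(⋃_{j∈N₁∪N₂} {λ r^j : λ > λ⁻_j}) + recc(C)`. -/
def S0Cset (xb : Fin n → ℝ) (r : ι → Fin n → ℝ) (C : Set (Fin n → ℝ)) :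
    Set (Fin n → ℝ) :=
  {xb} + convexHull ℝ (⋃ j ∈ N1set xb r C ∪ N2set xb r C,
      {y : Fin n → ℝ | ∃ l : ℝ, lamM xb (r j) C < (l : EReal) ∧ y = l • r j})
    + recc C

/-!
In coordinates `x = x̄ + Σ c_j r^j`, every point of the hull defining `S₀^C` has
`Σ c_j / λ⁻_j > 1`, every point of the hull defining `S_k^C` has `Σ c_j / λ⁺_j < 1`, and
conversely every `c ≥ 0` supported on `N₁ ∪ N₂` satisfying both strict inequalities is a point
of `T` (spread the mass of `c` over points of the open segments). `T^C ⊆ S₀^C ∩ ⋂ S_k^C` is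
then monotonicity, together with the fact that the rays of `N₁` are recession directions of `C`.

For the converse write `x = x̄ + Σ y_j r^j` and look at the splittings `y = c + t` with
`Σ t_j r^j ∈ recc C`, `c ≥ 0` and `Σ c_j / λ⁻_j ≥ 1`. They form a compact set, because
`recc C` is closed and lies in the cone of `P^B`; take one minimising `Σ c_j / λ⁺_j`. If the
minimum were `≥ 1`, some `k ∈ N₂` would carry mass, and a small step towards the splitting
provided by `x ∈ S_k^C` would decrease it. So the minimum is `< 1`, and mixing in a little of
the splitting provided by `x ∈ S₀^C` makes the first inequality strict.
-/

open Filter Topology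

set_option linter.unusedSectionVars false

section RecessionCone

variable {C : Set (Fin n → ℝ)}

lemma zero_mem_recc (C : Set (Fin n → ℝ)) : (0 : Fin n → ℝ) ∈ recc C := by
  intro a ha t _
  simpa using ha

lemma add_mem_recc {d e : Fin n → ℝ} (hd : d ∈ recc C) (he : e ∈ recc C) : d + e ∈ recc C := by
  intro a ha t ht
  simpa [smul_add, add_assoc] using he _ (hd a ha t ht) t ht

lemma smul_mem_recc {d : Fin n → ℝ} (hd : d ∈ recc C) {s : ℝ} (hs : 0 ≤ s) : s • d ∈ recc C := by
  intro a ha t ht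
  simpa [smul_smul] using hd a ha (t * s) (mul_nonneg ht hs)

lemma convex_recc (C : Set (Fin n → ℝ)) : Convex ℝ (recc C) :=
  fun _ hd _ he _ _ ha hb _ => add_mem_recc (smul_mem_recc hd ha) (smul_mem_recc he hb)

lemma add_mem_of_add_two_smul_mem_closure (hCopen : IsOpen C) (hCconv : Convex ℝ C)
    {a d : Fin n → ℝ} (ha : a ∈ C) (h : a + (2 : ℝ) • d ∈ closure C) : a + d ∈ C := by
  have hmid := hCconv.combo_interior_closure_mem_interior (hCopen.interior_eq ▸ ha) h
    (a := 1 / 2) (b := 1 / 2) (by norm_num) (by norm_num) (by norm_num)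
  rw [hCopen.interior_eq] at hmid
  convert hmid using 1
  module

lemma isClosed_recc (hCopen : IsOpen C) (hCconv : Convex ℝ C) : IsClosed (recc C) := by
  have hrecc : recc C = ⋂ a ∈ C, ⋂ t ∈ Ici (0 : ℝ), (fun d => a + t • d) ⁻¹' closure C := by
    ext d
    simp only [mem_iInter, mem_preimage, mem_Ici]
    refine ⟨fun hd a ha t ht => subset_closure (hd a ha t ht), fun hd a ha t ht => ?_⟩
    refine add_mem_of_add_two_smul_mem_closure hCopen hCconv ha ?_
    simpa [smul_smul] using hd a ha (2 * t) (by positivity)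
  rw [hrecc]
  exact isClosed_biInter fun a _ => isClosed_biInter fun t _ =>
    isClosed_closure.preimage (by fun_prop)

lemma mem_recc_of_frequently_mem (hCopen : IsOpen C) (hCconv : Convex ℝ C) {p d : Fin n → ℝ}
    (h : ∃ᶠ l : ℝ in atTop, p + l • d ∈ C) : d ∈ recc C := by
  intro b hb t ht
  -- `b + t • d` lies on the segment from `p + l • d` to a point `b' θ` with `θ = t / l`,
  -- and `b' θ → b` as `l → ∞`
  set b' : ℝ → Fin n → ℝ := fun θ => (1 - θ)⁻¹ • (b - θ • p)
  have hb' : ∀ᶠ θ in 𝓝 (0 : ℝ), b' θ ∈ C := by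
    have hcont : ContinuousAt b' 0 := by fun_prop (disch := norm_num)
    exact hcont.preimage_mem_nhds (by simpa [b'] using hCopen.mem_nhds hb)
  have hθ : Tendsto (fun l : ℝ => t / l) atTop (𝓝 0) := tendsto_const_nhds.div_atTop tendsto_id
  obtain ⟨l, ⟨⟨hl, hl1⟩, hlpos⟩, hlC⟩ :=
    ((hθ.eventually (hb'.and (gt_mem_nhds one_pos))).and (eventually_gt_atTop 0)).and_frequently h
      |>.exists
  have hcombo : b + t • d = (1 - t / l) • b' (t / l) + (t / l) • (p + l • d) := by
    simp only [b', smul_inv_smul₀ (sub_ne_zero.mpr hl1.ne'), smul_add, smul_smul,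
      div_mul_cancel₀ t hlpos.ne']
    abel
  rw [hcombo]
  exact hCconv hl hlC (by linarith) (by positivity) (by ring)

end RecessionCone

section RaysHull

variable {V : Type*} [AddCommGroup V] [Module ℝ V]

lemma mem_singleton_add_add {a x : V} {s t : Set V} :
    x ∈ {a} + s + t ↔ ∃ h ∈ s, ∃ d ∈ t, a + h + d = x := by
  simp only [singleton_add, Set.mem_add, exists_exists_and_eq_and, mem_image]

variable (r : ι → V) {s : Set ι} {G : ι → Set V}

lemma convexHull_biUnion_subset_image_linearCombination {w : ι → ℝ} {J : Set ℝ}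
    (hJ : Convex ℝ J) (hG : ∀ j ∈ s, ∀ y ∈ G j, ∃ l, 0 ≤ l ∧ l * w j ∈ J ∧ y = l • r j) :
    convexHull ℝ (⋃ j ∈ s, G j) ⊆
      Fintype.linearCombination ℝ r '' {c | 0 ≤ c ∧ (∀ j ∉ s, c j = 0) ∧ c ⬝ᵥ w ∈ J} := by
  classical
  refine convexHull_min ?_ (Convex.linear_image ?_ _)
  · simp only [iUnion_subset_iff]
    intro j hj y hy
    obtain ⟨l, hl, hlJ, rfl⟩ := hG j hj y hy
    refine ⟨Pi.single j l, ⟨Pi.single_nonneg.2 hl, fun i hi => ?_, ?_⟩,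
      Fintype.linearCombination_apply_single ℝ r j l⟩
    · simp [(ne_of_mem_of_not_mem hj hi).symm]
    · rwa [single_dotProduct]
  · rintro c ⟨hc0, hcs, hcJ⟩ c' ⟨hc'0, hc's, hc'J⟩ a b ha hb hab
    refine ⟨add_nonneg (smul_nonneg ha hc0) (smul_nonneg hb hc'0),
      fun j hj => by simp [hcs j hj, hc's j hj], ?_⟩
    rw [add_dotProduct, smul_dotProduct, smul_dotProduct]
    exact hJ hcJ hc'J ha hb hab

lemma linearCombination_mem_convexHull_biUnion {u v : ι → ℝ} (hv : ∀ j ∈ s, 0 ≤ v j)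
    (hvu : ∀ j ∈ s, v j < u j) (hG : ∀ j ∈ s, ∀ m, v j < m → m < u j → m⁻¹ • r j ∈ G j)
    {c : ι → ℝ} (hc : 0 ≤ c) (hcs : ∀ j ∉ s, c j = 0) (hcu : 1 < c ⬝ᵥ u) (hcv : c ⬝ᵥ v < 1) :
    Fintype.linearCombination ℝ r c ∈ convexHull ℝ (⋃ j ∈ s, G j) := by
  classical
  -- put the mass `c j * m j` at the point `(m j)⁻¹ • r j` of the ray, where `m` interpolates
  -- between `v` and `u` so that the masses add up to one
  set θ := (1 - c ⬝ᵥ v) / (c ⬝ᵥ u - c ⬝ᵥ v)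
  have hθ0 : 0 < θ := div_pos (by linarith) (by linarith)
  have hθ1 : θ < 1 := (div_lt_one (by linarith)).2 (by linarith)
  set m : ι → ℝ := (1 - θ) • v + θ • u
  have hm : ∀ j ∈ s, v j < m j ∧ m j < u j := fun j hj => by
    simp only [m, Pi.add_apply, Pi.smul_apply, smul_eq_mul]
    constructor <;> nlinarith [hvu j hj]
  have hmpos : ∀ j ∈ s, 0 < m j := fun j hj => (hv j hj).trans_lt (hm j hj).1
  have hcm : ∀ j, j ∉ s → c j * m j = 0 := fun j hj => by rw [hcs j hj, zero_mul]
  have hsum : ∑ j ∈ Finset.univ.filter (· ∈ s), c j * m j = 1 := by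
    rw [Finset.sum_filter,
      Finset.sum_congr rfl fun j _ => ite_eq_left_iff.2 fun hj => (hcm j hj).symm]
    change c ⬝ᵥ m = 1
    have hθ : θ * (c ⬝ᵥ u - c ⬝ᵥ v) = 1 - c ⬝ᵥ v := div_mul_cancel₀ _ (by linarith)
    simp only [m, dotProduct_add, dotProduct_smul, smul_eq_mul]
    linear_combination hθ
  have hLc : Fintype.linearCombination ℝ r c
      = ∑ j ∈ Finset.univ.filter (· ∈ s), (c j * m j) • (m j)⁻¹ • r j := by
    rw [Fintype.linearCombination_apply, Finset.sum_filter]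
    refine Finset.sum_congr rfl fun j _ => ?_
    split_ifs with hj
    · rw [smul_smul, mul_assoc, mul_inv_cancel₀ (hmpos j hj).ne', mul_one]
    · rw [hcs j hj, zero_smul]
  rw [hLc]
  refine (convex_convexHull ℝ _).sum_mem (fun j hj => ?_) hsum fun j hj => ?_ <;>
    replace hj : j ∈ s := (Finset.mem_filter.1 hj).2
  · exact mul_nonneg (hc j) (hmpos j hj).le
  · exact subset_convexHull ℝ _ (mem_biUnion hj (hG j hj _ (hm j hj).1 (hm j hj).2))

end RaysHull

section MassTransfer

lemma tendsto_one_sub_mul_add_mul (a b : ℝ) :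
    Tendsto (fun θ : ℝ => (1 - θ) * a + θ * b) (𝓝[>] 0) (𝓝 a) := by
  have hcont : Continuous fun θ : ℝ => (1 - θ) * a + θ * b := by fun_prop
  simpa using (hcont.tendsto 0).mono_left nhdsWithin_le_nhds

lemma eventually_mem_Ioo_zero_one : ∀ᶠ θ in 𝓝[>] (0 : ℝ), θ ∈ Ioo 0 1 :=
  Ioo_mem_nhdsGT one_pos

lemma combo_dotProduct (θ : ℝ) (c c' w : ι → ℝ) :
    ((1 - θ) • c + θ • c') ⬝ᵥ w = (1 - θ) * (c ⬝ᵥ w) + θ * (c' ⬝ᵥ w) := by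
  simp only [add_dotProduct, smul_dotProduct, smul_eq_mul]

variable {Q : Set (ι → ℝ)} {E : Set ι} {u v : ι → ℝ}

lemma dotProduct_lt_one_of_isMinOn (hQc : Convex ℝ Q) (hQE : ∀ c ∈ Q, ∀ j ∉ E, c j = 0)
    (hvu : ∀ j ∈ E, v j < u j)
    (hk : ∀ k ∈ E, 0 < v k → ∃ c ∈ Q, (∀ j ≠ k, 0 ≤ c j) ∧ c ⬝ᵥ v < 1) {cm : ι → ℝ}
    (hcm : cm ∈ Q ∩ {c | 0 ≤ c ∧ 1 ≤ c ⬝ᵥ u})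
    (hmin : IsMinOn (· ⬝ᵥ v) (Q ∩ {c | 0 ≤ c ∧ 1 ≤ c ⬝ᵥ u}) cm) :
    cm ⬝ᵥ v < 1 := by
  obtain ⟨hcmQ, hcm0, hcmu⟩ := hcm
  by_contra! hcmv
  obtain ⟨k, -, hkpos⟩ : ∃ k ∈ Finset.univ, 0 < cm k * v k :=
    Finset.exists_lt_of_sum_lt (f := 0) (by simpa [dotProduct] using zero_lt_one.trans_le hcmv)
  have hkE : k ∈ E := by
    by_contra hk
    simp [hQE cm hcmQ k hk] at hkpos
  have hcmk : 0 < cm k := (hcm0 k).lt_of_ne fun h => by simp [← h] at hkpos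
  have hvk : 0 < v k := pos_of_mul_pos_right hkpos (hcm0 k)
  -- `cm` carries strictly more `u`-mass than `v`-mass, so it survives a small move towards `c'`
  have hvu_cm : cm ⬝ᵥ v < cm ⬝ᵥ u := by
    refine Finset.sum_lt_sum (fun j _ => ?_) ⟨k, Finset.mem_univ k, ?_⟩
    · by_cases hj : j ∈ E
      · exact mul_le_mul_of_nonneg_left (hvu j hj).le (hcm0 j)
      · simp [hQE cm hcmQ j hj]
    · exact mul_lt_mul_of_pos_left (hvu k hkE) hcmk
  obtain ⟨c', hc'Q, hc'0, hc'v⟩ := hk k hkE hvk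
  obtain ⟨θ, ⟨hθ0, hθ1⟩, hθk, hθu⟩ := (eventually_mem_Ioo_zero_one.and
    (((tendsto_one_sub_mul_add_mul _ (c' k)).eventually (lt_mem_nhds hcmk)).and
      ((tendsto_one_sub_mul_add_mul _ (c' ⬝ᵥ u)).eventually
        (lt_mem_nhds (hcmv.trans_lt hvu_cm))))).exists
  have hmem : (1 - θ) • cm + θ • c' ∈ Q ∩ {c | 0 ≤ c ∧ 1 ≤ c ⬝ᵥ u} := by
    refine ⟨hQc hcmQ hc'Q (by linarith) hθ0.le (by ring), fun j => ?_, ?_⟩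
    · simp only [Pi.zero_apply, Pi.add_apply, Pi.smul_apply, smul_eq_mul]
      by_cases hj : j = k
      · subst hj
        exact hθk.le
      · exact add_nonneg (mul_nonneg (by linarith) (hcm0 j)) (mul_nonneg hθ0.le (hc'0 j hj))
    · rw [combo_dotProduct]
      exact hθu.le
  have hle := isMinOn_iff.1 hmin _ hmem
  rw [combo_dotProduct] at hle
  nlinarith

lemma exists_one_lt_dotProduct_and_dotProduct_lt_one (hQ : IsClosed Q) (hQc : Convex ℝ Q)
    (hQb : BddAbove Q) (hQE : ∀ c ∈ Q, ∀ j ∉ E, c j = 0) (hvu : ∀ j ∈ E, v j < u j)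
    (h0 : ∃ c ∈ Q, 0 ≤ c ∧ 1 < c ⬝ᵥ u)
    (hk : ∀ k ∈ E, 0 < v k → ∃ c ∈ Q, (∀ j ≠ k, 0 ≤ c j) ∧ c ⬝ᵥ v < 1) :
    ∃ c ∈ Q, 0 ≤ c ∧ 1 < c ⬝ᵥ u ∧ c ⬝ᵥ v < 1 := by
  obtain ⟨c0, hc0Q, hc00, hc0u⟩ := h0
  obtain ⟨y, hy⟩ := hQb
  have hcont : ∀ w : ι → ℝ, Continuous (· ⬝ᵥ w) := fun w => by fun_prop
  have hP : IsCompact (Q ∩ {c | 0 ≤ c ∧ 1 ≤ c ⬝ᵥ u}) :=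
    isCompact_Icc.of_isClosed_subset
      (hQ.inter ((isClosed_le continuous_const continuous_id).inter
        (isClosed_le continuous_const (hcont u))))
      fun c hc => ⟨hc.2.1, hy hc.1⟩
  obtain ⟨cm, hcm, hmin⟩ := hP.exists_isMinOn ⟨c0, hc0Q, hc00, hc0u.le⟩ (hcont v).continuousOn
  have hcmv := dotProduct_lt_one_of_isMinOn hQc hQE hvu hk hcm hmin
  obtain ⟨θ, ⟨hθ0, hθ1⟩, hθv⟩ := (eventually_mem_Ioo_zero_one.and
    ((tendsto_one_sub_mul_add_mul _ (c0 ⬝ᵥ v)).eventually (gt_mem_nhds hcmv))).exists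
  refine ⟨(1 - θ) • cm + θ • c0, hQc hcm.1 hc0Q (by linarith) hθ0.le (by ring),
    add_nonneg (smul_nonneg (by linarith) hcm.2.1) (smul_nonneg hθ0.le hc00), ?_, ?_⟩ <;>
    rw [combo_dotProduct]
  · nlinarith [hcm.2.2]
  · exact hθv

end MassTransfer

section TheSets

variable {xb : Fin n → ℝ} {r : ι → Fin n → ℝ} {C : Set (Fin n → ℝ)} {j k : ι}

def invLamM (xb : Fin n → ℝ) (r : ι → Fin n → ℝ) (C : Set (Fin n → ℝ)) (j : ι) : ℝ :=
  (lamM xb (r j) C).toReal⁻¹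

-- As `EReal.toReal ⊤ = 0`, this is `0 = 1 / ∞` on `N₁`.
def invLamP (xb : Fin n → ℝ) (r : ι → Fin n → ℝ) (C : Set (Fin n → ℝ)) (j : ι) : ℝ :=
  (lamP xb (r j) C).toReal⁻¹

lemma EReal.toReal_pos_and_coe_toReal {e : EReal} (h0 : 0 < e) (htop : e < ⊤) :
    0 < e.toReal ∧ (e.toReal : EReal) = e :=
  ⟨EReal.toReal_pos h0 htop.ne, EReal.coe_toReal htop.ne (ne_bot_of_gt h0)⟩

lemma lamM_eq_coe (hj : j ∈ N1set xb r C ∪ N2set xb r C) :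
    0 < (lamM xb (r j) C).toReal ∧ ((lamM xb (r j) C).toReal : EReal) = lamM xb (r j) C :=
  EReal.toReal_pos_and_coe_toReal (hj.elim (·.1) (·.1)) (hj.elim (·.2.1) (·.2.1))

lemma lamP_eq_coe (hj : j ∈ N2set xb r C) :
    0 < (lamP xb (r j) C).toReal ∧ ((lamP xb (r j) C).toReal : EReal) = lamP xb (r j) C :=
  EReal.toReal_pos_and_coe_toReal (hj.1.trans hj.2.2.1) hj.2.2.2

lemma lamM_lt_coe_iff (hj : j ∈ N1set xb r C ∪ N2set xb r C) (l : ℝ) :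
    lamM xb (r j) C < l ↔ 1 < l * invLamM xb r C j := by
  obtain ⟨ha, hae⟩ := lamM_eq_coe hj
  rw [← hae, EReal.coe_lt_coe_iff, invLamM, ← div_eq_mul_inv, one_lt_div ha]

lemma pos_of_lamM_lt (hj : j ∈ N1set xb r C ∪ N2set xb r C) {l : ℝ}
    (hl : lamM xb (r j) C < l) : 0 < l := by
  obtain ⟨ha, hae⟩ := lamM_eq_coe hj
  rw [← hae, EReal.coe_lt_coe_iff] at hl
  exact ha.trans hl

lemma coe_lt_lamP_iff (hj : j ∈ N2set xb r C) (l : ℝ) :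
    (l : EReal) < lamP xb (r j) C ↔ l * invLamP xb r C j < 1 := by
  obtain ⟨hq, hqe⟩ := lamP_eq_coe hj
  rw [← hqe, EReal.coe_lt_coe_iff, invLamP, ← div_eq_mul_inv, div_lt_one hq]

lemma invLamP_eq_zero (hj : j ∈ N1set xb r C) : invLamP xb r C j = 0 := by
  simp [invLamP, hj.2.2]

lemma invLamP_pos (hj : j ∈ N2set xb r C) : 0 < invLamP xb r C j :=
  inv_pos.2 (lamP_eq_coe hj).1

lemma invLamP_nonneg (hj : j ∈ N1set xb r C ∪ N2set xb r C) : 0 ≤ invLamP xb r C j :=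
  hj.elim (fun h => (invLamP_eq_zero h).ge) fun h => (invLamP_pos h).le

lemma invLamP_lt_invLamM (hj : j ∈ N1set xb r C ∪ N2set xb r C) :
    invLamP xb r C j < invLamM xb r C j := by
  have ha := (lamM_eq_coe hj).1
  rcases hj with hj | hj
  · rw [invLamP_eq_zero hj]
    exact inv_pos.2 ha
  · obtain ⟨hq, hqe⟩ := lamP_eq_coe hj
    have haq := hj.2.2.1
    rw [← (lamM_eq_coe (Or.inr hj)).2, ← hqe, EReal.coe_lt_coe_iff] at haq
    exact (inv_lt_inv₀ hq ha).2 haq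

lemma mem_N2set_of_invLamP_pos (hj : j ∈ N1set xb r C ∪ N2set xb r C)
    (hv : 0 < invLamP xb r C j) : j ∈ N2set xb r C :=
  hj.resolve_left fun h => by simp [invLamP_eq_zero h] at hv

lemma mem_recc_of_mem_N1set (hCopen : IsOpen C) (hCconv : Convex ℝ C) (hj : j ∈ N1set xb r C) :
    r j ∈ recc C := by
  refine mem_recc_of_frequently_mem hCopen hCconv (p := xb) (frequently_atTop.2 fun M => ?_)
  obtain ⟨_, ⟨l, ⟨-, hlC⟩, rfl⟩, hMl⟩ := sSup_eq_top.1 hj.2.2 M (EReal.coe_lt_top M)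
  exact ⟨l, (EReal.coe_lt_coe_iff.1 hMl).le, hlC⟩

lemma TCset_subset_S0Cset : TCset xb r C ⊆ S0Cset xb r C :=
  add_subset_add (add_subset_add subset_rfl (convexHull_mono (iUnion₂_mono
    fun _ _ _ ⟨l, hl, _, hy⟩ => ⟨l, hl, hy⟩))) subset_rfl

lemma TCset_subset_SkCset (hCopen : IsOpen C) (hCconv : Convex ℝ C) (hk : k ∈ N2set xb r C) :
    TCset xb r C ⊆ SkCset xb r C k := by
  set Sk := convexHull ℝ (⋃ j ∈ N2set xb r C,
    {y : Fin n → ℝ | ∃ l : ℝ, 0 ≤ l ∧ (l : EReal) < lamP xb (r j) C ∧ y = l • r j})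
  have h0 : (0 : Fin n → ℝ) ∈ Sk := subset_convexHull ℝ _ (mem_biUnion hk
    ⟨0, le_rfl, EReal.coe_zero ▸ hk.1.trans hk.2.2.1, (zero_smul ℝ _).symm⟩)
  have hT : convexHull ℝ (⋃ j ∈ N1set xb r C ∪ N2set xb r C,
      {y : Fin n → ℝ | ∃ l : ℝ, lamM xb (r j) C < (l : EReal) ∧ (l : EReal) < lamP xb (r j) C ∧
        y = l • r j}) ⊆ Sk + recc C := by
    refine convexHull_min ?_ ((convex_convexHull ℝ _).add (convex_recc C))
    simp only [iUnion_subset_iff]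
    rintro j hj _ ⟨l, hlM, hlP, rfl⟩
    rcases hj with hj1 | hj2
    · exact ⟨0, h0, l • r j, smul_mem_recc (mem_recc_of_mem_N1set hCopen hCconv hj1)
        (pos_of_lamM_lt (Or.inl hj1) hlM).le, zero_add _⟩
    · exact ⟨l • r j, subset_convexHull ℝ _ (mem_biUnion hj2
        ⟨l, (pos_of_lamM_lt (Or.inr hj2) hlM).le, hlP, rfl⟩), 0, zero_mem_recc C, add_zero _⟩
  intro x hx
  obtain ⟨h, hh, d, hd, rfl⟩ := mem_singleton_add_add.1 hx
  obtain ⟨h', hh', d', hd', rfl⟩ := hT hh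
  exact ⟨xb + h' + 0, mem_singleton_add_add.2 ⟨h', hh', 0, ⟨0, le_rfl, (zero_smul ℝ _).symm⟩,
    rfl⟩, d' + d, add_mem_recc hd' hd, by dsimp only; abel⟩

end TheSets

section ReverseInclusion

variable {xb : Fin n → ℝ} {r : ι → Fin n → ℝ} {C : Set (Fin n → ℝ)}

local notation "L" => Fintype.linearCombination ℝ r

lemma nonneg_of_linearCombination_mem_recc (hr : LinearIndependent ℝ r)
    (hrecc : recc C ⊆ reccPBset r) {t : ι → ℝ} (ht : L t ∈ recc C) : 0 ≤ t := by
  obtain ⟨t', ht'0, ht'⟩ := hrecc ht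
  rw [← Fintype.linearCombination_apply] at ht'
  rw [hr.fintypeLinearCombination_injective ht']
  exact ht'0

lemma exists_coords_of_mem_S0Cset (hrecc : recc C ⊆ reccPBset r) {x : Fin n → ℝ}
    (hx : x ∈ S0Cset xb r C) :
    ∃ y c : ι → ℝ, 0 ≤ c ∧ (∀ j ∉ N1set xb r C ∪ N2set xb r C, c j = 0) ∧
      1 < c ⬝ᵥ invLamM xb r C ∧ L (y - c) ∈ recc C ∧ x = xb + L y := by
  obtain ⟨h, hh, d, hd, rfl⟩ := mem_singleton_add_add.1 hx
  obtain ⟨c, ⟨hc0, hcE, hcu⟩, rfl⟩ := convexHull_biUnion_subset_image_linearCombination r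
    (w := invLamM xb r C) (convex_Ioi 1) (by
      rintro j hj _ ⟨l, hl, hy⟩
      exact ⟨l, (pos_of_lamM_lt hj hl).le, (lamM_lt_coe_iff hj l).1 hl, hy⟩) hh
  obtain ⟨t, -, ht⟩ := hrecc hd
  rw [← Fintype.linearCombination_apply] at ht
  subst ht
  exact ⟨c + t, c, hc0, hcE, hcu, by simpa using hd, by rw [map_add, add_assoc]⟩

lemma exists_coords_of_mem_SkCset {k : ι} (hk : k ∈ N2set xb r C) {y : ι → ℝ}
    (hx : xb + L y ∈ SkCset xb r C k) :
    ∃ c : ι → ℝ, ((∀ j ∉ N1set xb r C ∪ N2set xb r C, c j = 0) ∧ L (y - c) ∈ recc C) ∧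
      (∀ j ≠ k, 0 ≤ c j) ∧ c ⬝ᵥ invLamP xb r C < 1 := by
  classical
  obtain ⟨_, hxh, d, hd, hx⟩ := hx
  obtain ⟨h, hh, _, ⟨μ, hμ, rfl⟩, rfl⟩ := mem_singleton_add_add.1 hxh
  obtain ⟨c, ⟨hc0, hcN2, hcv⟩, rfl⟩ := convexHull_biUnion_subset_image_linearCombination r
    (w := invLamP xb r C) (convex_Iio 1) (by
      rintro j hj _ ⟨l, hl0, hl, hy⟩
      exact ⟨l, hl0, (coe_lt_lamP_iff hj l).1 hl, hy⟩) hh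
  refine ⟨c + Pi.single k μ, ⟨fun j hj => ?_, ?_⟩, fun j hj => ?_, ?_⟩
  · have hjk : j ≠ k := fun h => hj (h ▸ Or.inr hk)
    simp [hcN2 j fun h => hj (Or.inr h), hjk]
  · have hy : L y = L c + μ • r k + d :=
      add_left_cancel (a := xb) (by rw [← hx]; simp only [add_assoc])
    rw [map_sub, map_add, Fintype.linearCombination_apply_single, hy]
    convert hd using 1
    abel
  · simpa [hj] using hc0 j
  · rw [add_dotProduct, single_dotProduct]
    nlinarith [invLamP_pos hk, mem_Iio.1 hcv]

lemma add_linearCombination_mem_TCset {y c : ι → ℝ} (hc0 : 0 ≤ c)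
    (hcE : ∀ j ∉ N1set xb r C ∪ N2set xb r C, c j = 0) (hcu : 1 < c ⬝ᵥ invLamM xb r C)
    (hcv : c ⬝ᵥ invLamP xb r C < 1) (hyc : L (y - c) ∈ recc C) :
    xb + L y ∈ TCset xb r C := by
  refine mem_singleton_add_add.2 ⟨L c, linearCombination_mem_convexHull_biUnion r
    (fun j hj => invLamP_nonneg hj) (fun j hj => invLamP_lt_invLamM hj) ?_ hc0 hcE hcu hcv,
    L (y - c), hyc, by rw [map_sub, add_add_sub_cancel]⟩
  intro j hj m hvm hmu
  have hm : 0 < m := (invLamP_nonneg hj).trans_lt hvm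
  refine ⟨m⁻¹, (lamM_lt_coe_iff hj _).2 ?_, ?_, rfl⟩
  · rwa [← div_eq_inv_mul, one_lt_div hm]
  · rcases hj with hj | hj
    · simp [hj.2.2]
    · rwa [coe_lt_lamP_iff hj, ← div_eq_inv_mul, div_lt_one hm]

lemma inter_subset_TCset (hr : LinearIndependent ℝ r) (hCopen : IsOpen C) (hCconv : Convex ℝ C)
    (hrecc : recc C ⊆ reccPBset r) :
    S0Cset xb r C ∩ ⋂ k ∈ N2set xb r C, SkCset xb r C k ⊆ TCset xb r C := by
  rintro x ⟨hx0, hxk⟩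
  obtain ⟨y, c0, hc00, hc0E, hc0u, hc0y, rfl⟩ := exists_coords_of_mem_S0Cset hrecc hx0
  set Q : Set (ι → ℝ) :=
    {c | (∀ j ∉ N1set xb r C ∪ N2set xb r C, c j = 0) ∧ L (y - c) ∈ recc C}
  have hQ : IsClosed Q := by
    have hL : Continuous L := LinearMap.continuous_of_finiteDimensional _
    have hE : IsClosed {c : ι → ℝ | ∀ j ∉ N1set xb r C ∪ N2set xb r C, c j = 0} := by
      simp only [ofPred_forall]
      exact isClosed_biInter fun j _ => isClosed_eq (continuous_apply j) continuous_const
    exact hE.inter ((isClosed_recc hCopen hCconv).preimage (by fun_prop))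
  have hQc : Convex ℝ Q := by
    rintro c ⟨hcE, hcy⟩ c' ⟨hc'E, hc'y⟩ a b ha hb hab
    refine ⟨fun j hj => by simp [hcE j hj, hc'E j hj], ?_⟩
    have hy : y - (a • c + b • c') = a • (y - c) + b • (y - c') := by
      linear_combination (norm := module) -(hab • y)
    rw [hy, map_add, map_smul, map_smul]
    exact convex_recc C hcy hc'y ha hb hab
  have hQb : BddAbove Q :=
    ⟨y, fun c hc => sub_nonneg.1 (nonneg_of_linearCombination_mem_recc hr hrecc hc.2)⟩
  obtain ⟨c, ⟨hcE, hcy⟩, hc0, hcu, hcv⟩ := exists_one_lt_dotProduct_and_dotProduct_lt_one hQ hQc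
    hQb (fun c hc => hc.1) (fun j hj => invLamP_lt_invLamM hj) ⟨c0, ⟨hc0E, hc0y⟩, hc00, hc0u⟩
    fun k hkE hvk =>
      have hk := mem_N2set_of_invLamP_pos hkE hvk
      exists_coords_of_mem_SkCset hk (mem_iInter₂.1 hxk k hk)
  exact add_linearCombination_mem_TCset hc0 hcE hcu hcv hcy

end ReverseInclusion

theorem stmt12_general (xb : Fin n → ℝ) (r : ι → Fin n → ℝ) (hr : LinearIndependent ℝ r)
    (C : Set (Fin n → ℝ)) (hCopen : IsOpen C) (hCconv : Convex ℝ C)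
    (hrecc : recc C ⊆ reccPBset r) :
    TCset xb r C = S0Cset xb r C ∩ ⋂ k ∈ N2set xb r C, SkCset xb r C k ∧
      PBset xb r \ TCset xb r C
        = (PBset xb r \ S0Cset xb r C) ∪ ⋃ k ∈ N2set xb r C, (PBset xb r \ SkCset xb r C k) := by
  have hTC : TCset xb r C = S0Cset xb r C ∩ ⋂ k ∈ N2set xb r C, SkCset xb r C k :=
    Subset.antisymm
      (subset_inter TCset_subset_S0Cset
        (subset_iInter₂ fun _ hk => TCset_subset_SkCset hCopen hCconv hk))
      (inter_subset_TCset hr hCopen hCconv hrecc)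
  refine ⟨hTC, ?_⟩
  rw [hTC, sdiff_inter]
  simp only [sdiff_iInter]

/-- Theorem 5. `T^C = S₀^C ∩ (⋂_{k∈N₂} S_k^C)`, hence
`P^B ∖ T^C = (P^B ∖ S₀^C) ∪ ⋃_{k∈N₂} (P^B ∖ S_k^C)`. -/
theorem stmt12 (xb : Fin n → ℝ) (r : ι → Fin n → ℝ) (hr : LinearIndependent ℝ r)
    (C : Set (Fin n → ℝ)) (hCopen : IsOpen C) (hCconv : Convex ℝ C)
    (hxb : xb ∉ closure C) (hrecc : recc C ⊆ reccPBset r) :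
    TCset xb r C = S0Cset xb r C ∩ ⋂ k ∈ N2set xb r C, SkCset xb r C k ∧
      PBset xb r \ TCset xb r C
        = (PBset xb r \ S0Cset xb r C) ∪ ⋃ k ∈ N2set xb r C, (PBset xb r \ SkCset xb r C k) :=
  stmt12_general xb r hr C hCopen hCconv hrecc
end
end
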